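/- Let G1 and G2 be two DAGs over the same finite set of variables with identical parent sets for every variable in a set S, and suppose a strictly positive joint distribution P factorizes according to both G1 and G2. Then the interventional query P(Q = q | do(R_j = r_j for j ∈ S)) computed via the truncated factorization of G1 equals the one computed via the truncated factorization of G2. -/

import Mathlib

/-!
Summing a Bayesian-network factorization `∏ i, K i` over the variables outside a set `A` closed
under taking parents leaves `∏ i ∈ A, K i`: a variable outside `A` all of whose parents lie in `A`
has no child in `A`, so it occurs in a single factor, which sums to one. Applying this to the
strict ancestors `A` of `j` and to `insert j A`, and then summing out `A \ pa j`, shows that the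
joint marginal of `j` and its parents is `K j` times the marginal of its parents. So wherever `P`
is positive, `K j` is determined by `P` and `pa j`. The kernels of the intervened variables
therefore agree in the two networks, and dividing `P` by their product gives the same truncated
factorization pointwise.
-/

open Finset Function

variable {ι : Type*} {X : ι → Type*}

section Marginal

variable [Fintype ι] [DecidableEq ι] [∀ i, Fintype (X i)] [∀ i, DecidableEq (X i)]
  {M : Type*} [AddCommMonoid M]

def marginal (g : (∀ i, X i) → M) (E : Finset ι) (a : ∀ i, X i) : M :=
  ∑ b, if ∀ i ∈ E, b i = a i then g b else 0

theorem marginal_univ (g : (∀ i, X i) → M) (a : ∀ i, X i) : marginal g univ a = g a := by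
  rw [marginal, Fintype.sum_eq_single a]
  · simp
  · intro b hb
    rw [if_neg fun h => hb (funext fun i => h i (mem_univ i))]

theorem marginal_marginal (g : (∀ i, X i) → M) {E F : Finset ι} (hEF : E ∪ F = univ)
    (a : ∀ i, X i) : marginal (marginal g F) E a = marginal g (E ∩ F) a := by
  simp only [marginal, ite_sum_zero]
  rw [sum_comm]
  refine Fintype.sum_congr _ _ fun b => ?_
  -- the only `c` agreeing with `a` on `E` and with `b` on `F`
  let c₀ : ∀ i, X i := fun i => if i ∈ F then b i else a i
  have key : ∀ c : ∀ i, X i, ((∀ i ∈ E, c i = a i) ∧ ∀ i ∈ F, b i = c i) ↔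
      c = c₀ ∧ ∀ i ∈ E ∩ F, b i = a i := by
    intro c
    constructor
    · rintro ⟨hE, hF⟩
      refine ⟨funext fun i => ?_, fun i hi => ?_⟩
      · by_cases hi : i ∈ F
        · simp [c₀, hi, hF i hi]
        · have hi' : i ∈ E ∪ F := hEF ▸ mem_univ i
          simp [c₀, hi, hE i ((mem_union.1 hi').resolve_right hi)]
      · rw [mem_inter] at hi
        rw [hF i hi.2, hE i hi.1]
    · rintro ⟨rfl, h⟩
      refine ⟨fun i hi => ?_, fun i hi => by simp [c₀, hi]⟩
      by_cases hiF : i ∈ F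
      · simp [c₀, hiF, h i (mem_inter.2 ⟨hi, hiF⟩)]
      · simp [c₀, hiF]
  simp_rw [← ite_and, key, ite_and, sum_ite_eq', mem_univ, if_true]

theorem marginal_univ_erase (g : (∀ i, X i) → M) (d : ι) (a : ∀ i, X i) :
    marginal g (univ.erase d) a = ∑ v, g (update a d v) := by
  rw [marginal, ← sum_filter]
  symm
  refine sum_nbij' (update a d) (· d) (fun v _ => ?_) (by simp) (fun v _ => by simp)
    (fun b hb => ?_) (fun v _ => rfl)
  · simp +contextual [update_of_ne]
  · simp only [mem_filter, mem_univ, mem_erase, and_true, true_and] at hb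
    funext i
    by_cases hi : i = d
    · subst hi; simp
    · simp [hi, hb i hi]

theorem marginal_eq_sum_update (g : (∀ i, X i) → M) {E : Finset ι} {d : ι} (hd : d ∉ E)
    (a : ∀ i, X i) : marginal g E a = ∑ v, marginal g (insert d E) (update a d v) := by
  have hE : univ.erase d ∩ insert d E = E := by
    ext i; by_cases hi : i = d <;> simp [hi, hd]
  have hunion : univ.erase d ∪ insert d E = univ := by
    ext i; by_cases hi : i = d <;> simp [hi]
  rw [← marginal_univ_erase, marginal_marginal _ hunion, hE]

theorem marginal_mul_left_of_dependsOn {R : Type*} [NonUnitalNonAssocSemiring R]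
    {k h : (∀ i, X i) → R} {E : Finset ι} (hk : DependsOn k E) (a : ∀ i, X i) :
    marginal (fun b => k b * h b) E a = k a * marginal h E a := by
  simp only [marginal, mul_sum, mul_ite, mul_zero]
  refine Fintype.sum_congr _ _ fun b => ?_
  split_ifs with hb
  · rw [hk hb]
  · rfl

theorem marginal_pos {R : Type*} [AddCommMonoid R] [PartialOrder R] [IsOrderedCancelAddMonoid R]
    {g : (∀ i, X i) → R} (hg : ∀ b, 0 < g b) (E : Finset ι) (a : ∀ i, X i) :
    0 < marginal g E a := by
  refine sum_pos' (fun b _ => ?_) ⟨a, mem_univ a, by simpa using hg a⟩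
  split_ifs
  exacts [(hg b).le, le_rfl]

end Marginal

def IsAncestral (pa : ι → Finset ι) (A : Finset ι) : Prop :=
  ∀ i ∈ A, pa i ⊆ A

theorem IsAncestral.insert_of_parents_subset [DecidableEq ι] {pa : ι → Finset ι} {A : Finset ι}
    (hA : IsAncestral pa A) {c : ι} (hc : pa c ⊆ A) : IsAncestral pa (insert c A) := by
  intro i hi
  rcases mem_insert.1 hi with rfl | hi
  exacts [hc.trans (subset_insert _ _), (hA i hi).trans (subset_insert _ _)]

theorem exists_isAncestral_parents_subset [Fintype ι] {pa : ι → Finset ι}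
    (hwf : WellFounded fun j i => j ∈ pa i) (j : ι) :
    ∃ A, IsAncestral pa A ∧ pa j ⊆ A ∧ j ∉ A := by
  classical
  refine ⟨univ.filter fun i => Relation.TransGen (fun k i => k ∈ pa i) i j, fun i hi k hk => ?_,
    fun k hk => ?_, ?_⟩
  · simp only [mem_filter, mem_univ, true_and] at hi ⊢
    exact .head hk hi
  · simpa using .single hk
  · simpa using hwf.transGen.irrefl.irrefl j

theorem IsAncestral.dependsOn_prod [DecidableEq ι] {R : Type*} [CommMonoid R]
    {pa : ι → Finset ι} {K : ι → (∀ i, X i) → R} (hK : ∀ i, DependsOn (K i) ↑(insert i (pa i)))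
    {A : Finset ι} (hA : IsAncestral pa A) : DependsOn (fun b => ∏ i ∈ A, K i b) ↑A :=
  fun _ _ h => prod_congr rfl fun i hi => hK i fun j hj => h j <| by
    rcases mem_insert.1 hj with rfl | hj
    exacts [hi, hA i hi hj]

section BayesNet

variable [Fintype ι] [DecidableEq ι] [∀ i, Fintype (X i)] [∀ i, DecidableEq (X i)]
  {R : Type*} [CommSemiring R] {pa : ι → Finset ι} {K : ι → (∀ i, X i) → R}

structure IsBayesNet (pa : ι → Finset ι) (K : ι → (∀ i, X i) → R) : Prop where
  wellFounded : WellFounded fun j i => j ∈ pa i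
  dependsOn : ∀ i, DependsOn (K i) ↑(insert i (pa i))
  sum_update_eq_one : ∀ i a, ∑ v, K i (update a i v) = 1

theorem IsBayesNet.marginal_prod_of_isAncestral (hK : IsBayesNet pa K) {A : Finset ι}
    (hA : IsAncestral pa A) (a : ∀ i, X i) :
    marginal (fun b => ∏ i, K i b) A a = ∏ i ∈ A, K i a := by
  induction A using WellFoundedGT.induction generalizing a with
  | _ A ih =>
  by_cases hAu : A = univ
  · subst hAu
    exact marginal_univ _ a
  obtain ⟨d, hd⟩ : ∃ d, d ∉ A := by simpa [eq_univ_iff_forall] using hAu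
  obtain ⟨c, hc, hcmin⟩ := hK.wellFounded.has_min (↑(univ \ A) : Set ι) ⟨d, by simpa using hd⟩
  replace hc : c ∉ A := by simpa using hc
  have hpa : pa c ⊆ A := fun k hk => by
    by_contra hkA
    exact hcmin k (by simpa using hkA) hk
  have hcA : IsAncestral pa (insert c A) := hA.insert_of_parents_subset hpa
  have hupdate : ∀ v, ∏ i ∈ A, K i (update a c v) = ∏ i ∈ A, K i a := fun v =>
    hA.dependsOn_prod hK.dependsOn fun i hi => update_of_ne (ne_of_mem_of_not_mem hi hc) _ _
  calc marginal (fun b => ∏ i, K i b) A a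
      = ∑ v, K c (update a c v) * ∏ i ∈ A, K i (update a c v) := by
        simp_rw [marginal_eq_sum_update _ hc, ih _ (ssubset_insert hc) hcA, prod_insert hc]
    _ = ∏ i ∈ A, K i a := by
        simp_rw [hupdate, ← sum_mul, hK.sum_update_eq_one, one_mul]

theorem IsBayesNet.marginal_insert_parents (hK : IsBayesNet pa K) (j : ι) (a : ∀ i, X i) :
    marginal (fun b => ∏ i, K i b) (insert j (pa j)) a =
      K j a * marginal (fun b => ∏ i, K i b) (pa j) a := by
  obtain ⟨A, hA, hpaA, hjA⟩ := exists_isAncestral_parents_subset hK.wellFounded j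
  -- the coordinates of `A` that are not parents of `j` are summed out
  set E := univ \ (A \ pa j)
  have hAE : E ∪ A = univ := by grind
  have hAE' : E ∩ A = pa j := by grind
  have hjE : E ∪ insert j A = univ := by rw [union_insert, hAE, insert_eq_of_mem (mem_univ _)]
  have hjE' : E ∩ insert j A = insert j (pa j) := by
    rw [inter_insert_of_mem (by simp [E, hjA]), hAE']
  have hE : insert j (pa j) ⊆ E := hjE' ▸ inter_subset_left
  calc marginal (fun b => ∏ i, K i b) (insert j (pa j)) a
      = marginal (marginal (fun b => ∏ i, K i b) (insert j A)) E a := by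
        rw [marginal_marginal _ hjE, hjE']
    _ = marginal (fun c => K j c * marginal (fun b => ∏ i, K i b) A c) E a := by
        congr 1
        funext c
        rw [hK.marginal_prod_of_isAncestral (hA.insert_of_parents_subset hpaA),
          hK.marginal_prod_of_isAncestral hA, prod_insert hjA]
    _ = K j a * marginal (fun b => ∏ i, K i b) (pa j) a := by
        rw [marginal_mul_left_of_dependsOn ((hK.dependsOn j).mono (by exact_mod_cast hE)),
          marginal_marginal _ hAE, hAE']

theorem IsBayesNet.apply_eq_of_prod_eq [IsRightCancelMulZero R] {pa₁ pa₂ : ι → Finset ι}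
    {K₁ K₂ : ι → (∀ i, X i) → R} (hK₁ : IsBayesNet pa₁ K₁) (hK₂ : IsBayesNet pa₂ K₂)
    (hP : ∀ a, ∏ i, K₁ i a = ∏ i, K₂ i a) {j : ι} (hpa : pa₁ j = pa₂ j) {a : ∀ i, X i}
    (h0 : marginal (fun b => ∏ i, K₁ i b) (pa₁ j) a ≠ 0) : K₁ j a = K₂ j a := by
  have hP' : (fun b => ∏ i, K₁ i b) = fun b => ∏ i, K₂ i b := funext hP
  refine mul_right_cancel₀ h0 ?_
  rw [← hK₁.marginal_insert_parents, hP', hpa, hK₂.marginal_insert_parents]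

end BayesNet

theorem stmt1_general
    {n : ℕ} (X : Fin n → Type) [∀ i, Fintype (X i)] [∀ i, DecidableEq (X i)]
    (pa1 pa2 : Fin n → Finset (Fin n))
    (hacyc1 : WellFounded fun j i : Fin n => j ∈ pa1 i)
    (hacyc2 : WellFounded fun j i : Fin n => j ∈ pa2 i)
    (K1 K2 : ∀ _ : Fin n, (∀ j, X j) → ℝ)
    (hdep1 : ∀ i (a b : ∀ j, X j), (∀ j ∈ insert i (pa1 i), a j = b j) → K1 i a = K1 i b)
    (hdep2 : ∀ i (a b : ∀ j, X j), (∀ j ∈ insert i (pa2 i), a j = b j) → K2 i a = K2 i b)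
    (hpos1 : ∀ i a, 0 < K1 i a)
    (hnorm1 : ∀ i (a : ∀ j, X j), ∑ v : X i, K1 i (Function.update a i v) = 1)
    (hnorm2 : ∀ i (a : ∀ j, X j), ∑ v : X i, K2 i (Function.update a i v) = 1)
    (P : (∀ j, X j) → ℝ)
    (hfact1 : ∀ a, P a = ∏ i, K1 i a)
    (hfact2 : ∀ a, P a = ∏ i, K2 i a)
    (S : Finset (Fin n)) (r : ∀ j : Fin n, X j)
    (hpar : ∀ j ∈ S, pa1 j = pa2 j)
    (q0 : Fin n) (q : X q0) :
    (∑ a : ∀ j, X j,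
        if a q0 = q ∧ ∀ j ∈ S, a j = r j then ∏ i ∈ Finset.univ \ S, K1 i a else 0)
      =
    (∑ a : ∀ j, X j,
        if a q0 = q ∧ ∀ j ∈ S, a j = r j then ∏ i ∈ Finset.univ \ S, K2 i a else 0) := by
  have hK₁ : IsBayesNet pa1 K1 := ⟨hacyc1, fun i _ _ h => hdep1 i _ _ h, hnorm1⟩
  have hK₂ : IsBayesNet pa2 K2 := ⟨hacyc2, fun i _ _ h => hdep2 i _ _ h, hnorm2⟩
  have hprod : ∀ a, ∏ i, K1 i a = ∏ i, K2 i a := fun a => (hfact1 a).symm.trans (hfact2 a)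
  have hK : ∀ j ∈ S, ∀ a, K1 j a = K2 j a := fun j hj a =>
    hK₁.apply_eq_of_prod_eq hK₂ hprod (hpar j hj)
      (marginal_pos (fun b => prod_pos fun i _ => hpos1 i b) _ a).ne'
  have htrunc : ∀ a, ∏ i ∈ univ \ S, K1 i a = ∏ i ∈ univ \ S, K2 i a := by
    intro a
    refine mul_right_cancel₀ (prod_pos (s := S) fun i _ => hpos1 i a).ne' ?_
    calc (∏ i ∈ univ \ S, K1 i a) * ∏ i ∈ S, K1 i a
        = (∏ i ∈ univ \ S, K2 i a) * ∏ i ∈ S, K2 i a := by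
          rw [prod_sdiff (subset_univ S), prod_sdiff (subset_univ S), hprod]
      _ = (∏ i ∈ univ \ S, K2 i a) * ∏ i ∈ S, K1 i a := by
          rw [prod_congr rfl fun j hj => hK j hj a]
  simp_rw [htrunc]

/-- If a strictly positive joint distribution `P` factorizes according
to two DAGs `pa1` and `pa2` (with conditional kernels `K1`, `K2`), and the parent
sets of all intervened variables (those in `S`) agree in the two DAGs, then the
interventional query `P(Q = q | do(R_j = r_j, j ∈ S))` computed via the truncated
factorization of the first DAG equals the one computed via the second DAG. -/
theorem stmt1
    {n : ℕ} (X : Fin n → Type) [∀ i, Fintype (X i)] [∀ i, DecidableEq (X i)]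
    [∀ i, Nonempty (X i)]
    (pa1 pa2 : Fin n → Finset (Fin n))
    (hacyc1 : WellFounded fun j i : Fin n => j ∈ pa1 i)
    (hacyc2 : WellFounded fun j i : Fin n => j ∈ pa2 i)
    (K1 K2 : ∀ _ : Fin n, (∀ j, X j) → ℝ)
    (hdep1 : ∀ i (a b : ∀ j, X j), (∀ j ∈ insert i (pa1 i), a j = b j) → K1 i a = K1 i b)
    (hdep2 : ∀ i (a b : ∀ j, X j), (∀ j ∈ insert i (pa2 i), a j = b j) → K2 i a = K2 i b)
    (hpos1 : ∀ i a, 0 < K1 i a) (hpos2 : ∀ i a, 0 < K2 i a)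
    (hnorm1 : ∀ i (a : ∀ j, X j), ∑ v : X i, K1 i (Function.update a i v) = 1)
    (hnorm2 : ∀ i (a : ∀ j, X j), ∑ v : X i, K2 i (Function.update a i v) = 1)
    (P : (∀ j, X j) → ℝ)
    (hfact1 : ∀ a, P a = ∏ i, K1 i a)
    (hfact2 : ∀ a, P a = ∏ i, K2 i a)
    (S : Finset (Fin n)) (r : ∀ j : Fin n, X j)
    (hpar : ∀ j ∈ S, pa1 j = pa2 j)
    (q0 : Fin n) (hq0 : q0 ∉ S) (q : X q0) :
    (∑ a : ∀ j, X j,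
        if a q0 = q ∧ ∀ j ∈ S, a j = r j then ∏ i ∈ Finset.univ \ S, K1 i a else 0)
      =
    (∑ a : ∀ j, X j,
        if a q0 = q ∧ ∀ j ∈ S, a j = r j then ∏ i ∈ Finset.univ \ S, K2 i a else 0) :=
  stmt1_general X pa1 pa2 hacyc1 hacyc2 K1 K2 hdep1 hdep2 hpos1 hnorm1 hnorm2 P hfact1 hfact2 S r
    hpar q0 q
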